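/- arXiv:2103.08912 — 5 statements merged into one kernel-verified Lean document; each statement's English description precedes it below -/
import Mathlib

section
/- Let v₁, …, v_d ∈ ℤ^r be linearly independent vectors. Then for all integers a₁, …, a_d and positive integer q with gcd(a₁, …, a_d, q) = 1, the gcd of q with all coordinates of a₁v₁ + ⋯ + a_d v_d is at most d! · (max_i ‖v_i‖_∞)^d. -/
/-!
Pick `d` columns `c` of the integer matrix with rows `vᵢ` such that the square matrix `B` they
cut out has `det B ≠ 0`. If `g` divides `q` and every entry of `w = ∑ aᵢ vᵢ`, then it divides
`Bᵀ a`, so Cramer's rule `det B • a = adj Bᵀ (Bᵀ a)` gives `g ∣ det B * aᵢ` for all `i`. As `g ∣ q`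
is coprime to `gcd(aᵢ)`, this forces `g ∣ det B`, and the Leibniz expansion of the determinant
bounds `|det B|` by `d! · max |vᵢⱼ|^d`.
-/
open Matrix

namespace Matrix

variable {m n : Type*}

theorem span_cols_eq_top_of_linearIndependent_rows [Fintype m] [Fintype n] {K : Type*} [Field K]
    (M : Matrix m n K) (h : LinearIndependent K M.row) :
    Submodule.span K (Set.range M.col) = ⊤ := by
  apply Submodule.eq_top_of_finrank_eq
  rw [← rank_eq_finrank_span_cols, ← rank_transpose, rank_eq_finrank_span_cols, col_transpose,
    finrank_span_eq_card h, Module.finrank_fintype_fun_eq_card]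

theorem exists_det_submatrix_ne_zero_of_linearIndependent_rows_of_field [Fintype m] [DecidableEq m]
    [Fintype n] {K : Type*} [Field K] (M : Matrix m n K) (h : LinearIndependent K M.row) :
    ∃ c : m → n, (M.submatrix id c).det ≠ 0 := by
  obtain ⟨κ, a, -, hspan, hli⟩ := exists_linearIndependent' K M.col
  rw [span_cols_eq_top_of_linearIndependent_rows M h] at hspan
  let b := Module.Basis.mk hli hspan.ge
  have : Fintype κ := b.fintypeIndexOfRankLtAleph0 (Module.rank_lt_aleph0 K (m → K))
  let e : m ≃ κ := Fintype.equivOfCardEq (by rw [← Module.finrank_eq_card_basis b]; simp)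
  refine ⟨a ∘ e, ?_⟩
  rw [← isUnit_iff_ne_zero, ← isUnit_iff_isUnit_det, ← linearIndependent_cols_iff_isUnit]
  exact hli.comp e e.injective

theorem linearIndependent_rows_map_algebraMap {R : Type*} [CommRing R] (K : Type*) [CommRing K]
    [Algebra R K] [IsFractionRing R K] (M : Matrix m n R) (h : LinearIndependent R M.row) :
    LinearIndependent K (M.map (algebraMap R K)).row := by
  rw [← LinearIndependent.iff_fractionRing R K]
  have hinj : Function.Injective ((Algebra.linearMap R K).compLeft n) :=
    (IsFractionRing.injective R K).comp_left
  exact h.map' _ (LinearMap.ker_eq_bot.mpr hinj)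

theorem exists_det_submatrix_ne_zero_of_linearIndependent_rows [Fintype m] [DecidableEq m]
    [Fintype n] {R : Type*} [CommRing R] [IsDomain R] (M : Matrix m n R)
    (h : LinearIndependent R M.row) :
    ∃ c : m → n, (M.submatrix id c).det ≠ 0 := by
  obtain ⟨c, hc⟩ := exists_det_submatrix_ne_zero_of_linearIndependent_rows_of_field _
    (linearIndependent_rows_map_algebraMap (FractionRing R) M h)
  refine ⟨c, fun h0 => hc ?_⟩
  rw [submatrix_map, ← RingHom.mapMatrix_apply, ← RingHom.map_det, h0, map_zero]

theorem dvd_det_mul_of_forall_dvd_mulVec [Fintype m] [DecidableEq m] {R : Type*} [CommRing R]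
    (A : Matrix m m R) (x : m → R) {g : R} (h : ∀ k, g ∣ (A *ᵥ x) k) (i : m) :
    g ∣ A.det * x i := by
  have hcramer : A.det • x = A.adjugate *ᵥ (A *ᵥ x) := by
    rw [mulVec_mulVec, adjugate_mul, smul_mulVec, one_mulVec]
  rw [← smul_eq_mul, ← Pi.smul_apply, hcramer]
  exact Finset.dvd_sum fun k _ => (h k).mul_left _

theorem natAbs_det_le [Fintype m] [DecidableEq m] (A : Matrix m m ℤ) {b : ℕ}
    (h : ∀ i j, (A i j).natAbs ≤ b) :
    A.det.natAbs ≤ (Fintype.card m).factorial * b ^ Fintype.card m := by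
  have := det_le (abv := AbsoluteValue.abs) (x := (b : ℤ)) fun i j => by
    rw [AbsoluteValue.abs_apply, ← Int.natCast_natAbs]
    exact_mod_cast h i j
  rw [AbsoluteValue.abs_apply, ← Int.natCast_natAbs, nsmul_eq_mul] at this
  exact_mod_cast this

end Matrix

theorem Nat.dvd_of_coprime_gcd_of_forall_dvd_mul {ι : Type*} {s : Finset ι} {f : ι → ℕ}
    {g D : ℕ} (hcop : g.Coprime (s.gcd f)) (h : ∀ i ∈ s, g ∣ D * f i) : g ∣ D := by
  have hg : g ∣ s.gcd fun i => D * f i := Finset.dvd_gcd h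
  rw [Finset.gcd_mul_left, normalize_eq] at hg
  exact hcop.dvd_of_dvd_mul_right hg

theorem stmt_0_general (d r : ℕ) (v : Fin d → Fin r → ℤ)
    (hv : LinearIndependent ℤ v)
    (a : Fin d → ℤ) (q : ℕ)
    (hgcd : Nat.gcd (Finset.univ.gcd fun i => (a i).natAbs) q = 1) :
    Nat.gcd (Finset.univ.gcd fun j => ((∑ i, a i • v i) j).natAbs) q ≤
      d.factorial *
        (Finset.univ.sup fun i => Finset.univ.sup fun j => (v i j).natAbs) ^ d := by
  set w := ∑ i, a i • v i
  set g := Nat.gcd (Finset.univ.gcd fun j => (w j).natAbs) q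
  obtain ⟨c, hc⟩ := exists_det_submatrix_ne_zero_of_linearIndependent_rows (of v) hv
  set B := (of v).submatrix id c
  have hgw : ∀ j, (g : ℤ) ∣ w j := fun j => Int.natCast_dvd.mpr <|
    (Nat.gcd_dvd_left _ _).trans (Finset.gcd_dvd (Finset.mem_univ j))
  have hBa : ∀ k, (Bᵀ *ᵥ a) k = w (c k) := fun k => by
    simp [B, w, mulVec, dotProduct, Finset.sum_apply, mul_comm]
  have hcop : g.Coprime (Finset.univ.gcd fun i => (a i).natAbs) :=
    (Nat.Coprime.symm hgcd).coprime_dvd_left (Nat.gcd_dvd_right _ _)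
  have hdvd : g ∣ B.det.natAbs := Nat.dvd_of_coprime_gcd_of_forall_dvd_mul hcop fun i _ => by
    rw [← Int.natAbs_mul, ← Int.natCast_dvd, ← det_transpose]
    exact dvd_det_mul_of_forall_dvd_mulVec _ _ (fun k => hBa k ▸ hgw (c k)) i
  calc g ≤ B.det.natAbs := Nat.le_of_dvd (Int.natAbs_pos.mpr hc) hdvd
    _ ≤ _ := by
      simpa using natAbs_det_le B fun k l =>
        (Finset.le_sup (f := fun j => (v k j).natAbs) (Finset.mem_univ (c l))).trans <|
          Finset.le_sup (f := fun i => Finset.univ.sup fun j => (v i j).natAbs)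
            (Finset.mem_univ k)

/-- divisor estimate for integer combinations of linearly
independent integer vectors. -/
theorem stmt_0 (d r : ℕ) (v : Fin d → Fin r → ℤ)
    (hv : LinearIndependent ℤ v)
    (a : Fin d → ℤ) (q : ℕ) (hq : 0 < q)
    (hgcd : Nat.gcd (Finset.univ.gcd fun i => (a i).natAbs) q = 1) :
    Nat.gcd (Finset.univ.gcd fun j => ((∑ i, a i • v i) j).natAbs) q ≤
      d.factorial *
        (Finset.univ.sup fun i => Finset.univ.sup fun j => (v i j).natAbs) ^ d :=
  stmt_0_general d r v hv a q hgcd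
end

section
/- Let V : ℤ^d → ℤ^d be an injective linear map given by an integer matrix, and let a ∈ ℤ^d and q a positive integer such that gcd(a₁, …, a_d, q) = 1. Then the gcd of q with all entries of V(a) is at most |det V|. -/
/-! Multiplying `V a` by the adjugate of `V` gives `det V • a`, so every common divisor `g` of
`q` and the entries of `V a` divides `det V · aᵢ` for all `i`. Since such a `g` divides `q`, it
is coprime to `gcd(a)`, hence divides `det V`, which is nonzero because `V` is injective. -/

open Matrix

theorem Matrix.det_ne_zero_of_injective_mulVec {n R : Type*} [Fintype n] [DecidableEq n]
    [CommRing R] [IsDomain R] {A : Matrix n n R} (hA : Function.Injective A.mulVec) :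
    A.det ≠ 0 := fun h ↦ by
  obtain ⟨v, hv, hAv⟩ := exists_mulVec_eq_zero_iff.mpr h
  exact hv (hA (by rw [hAv, mulVec_zero]))

theorem Matrix.dvd_det_mul_of_forall_dvd_mulVec_s1 {n R : Type*} [Fintype n] [DecidableEq n]
    [CommRing R] (A : Matrix n n R) {v : n → R} {k : R} (hk : ∀ j, k ∣ (A *ᵥ v) j) (i : n) :
    k ∣ A.det * v i := by
  have hadj : A.det * v i = (A.adjugate *ᵥ (A *ᵥ v)) i := by
    rw [mulVec_mulVec, adjugate_mul, smul_mulVec, one_mulVec, Pi.smul_apply, smul_eq_mul]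
  rw [hadj]
  exact Finset.dvd_sum fun j _ ↦ (hk j).mul_left _

theorem Nat.dvd_of_forall_dvd_mul_of_coprime_gcd {ι : Type*} {s : Finset ι} {f : ι → ℕ}
    {g m : ℕ} (hdvd : ∀ i ∈ s, g ∣ m * f i) (hcop : g.Coprime (s.gcd f)) : g ∣ m := by
  have hgcd : g ∣ m * s.gcd f := by
    simpa [Finset.gcd_mul_left] using Finset.dvd_gcd hdvd
  exact hcop.dvd_of_dvd_mul_right hgcd

theorem stmt_1_general (d : ℕ) (V : Matrix (Fin d) (Fin d) ℤ)
    (hV : Function.Injective V.mulVec)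
    (a : Fin d → ℤ) (q : ℕ)
    (hgcd : Nat.gcd (Finset.univ.gcd fun i => (a i).natAbs) q = 1) :
    Nat.gcd (Finset.univ.gcd fun i => (V.mulVec a i).natAbs) q ≤ V.det.natAbs := by
  set g := Nat.gcd (Finset.univ.gcd fun i => (V.mulVec a i).natAbs) q
  have hentry (j : Fin d) : (g : ℤ) ∣ (V *ᵥ a) j :=
    Int.natCast_dvd.mpr ((Nat.gcd_dvd_left _ _).trans (Finset.gcd_dvd (Finset.mem_univ j)))
  have hprod : ∀ i ∈ Finset.univ, g ∣ V.det.natAbs * (a i).natAbs := fun i _ ↦ by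
    simpa [Int.natAbs_mul] using Int.natCast_dvd.mp (V.dvd_det_mul_of_forall_dvd_mulVec_s1 hentry i)
  have hcop : g.Coprime (Finset.univ.gcd fun i => (a i).natAbs) :=
    Nat.Coprime.coprime_dvd_left (Nat.gcd_dvd_right _ _) (Nat.Coprime.symm hgcd)
  exact Nat.le_of_dvd (Int.natAbs_pos.mpr (det_ne_zero_of_injective_mulVec hV))
    (Nat.dvd_of_forall_dvd_mul_of_coprime_gcd hprod hcop)

/-- if `V` is an injective integer matrix then the gcd of `q`
with the entries of `V a` is at most `|det V|`, provided `gcd(a, q) = 1`. -/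
theorem stmt_1 (d : ℕ) (V : Matrix (Fin d) (Fin d) ℤ)
    (hV : Function.Injective V.mulVec)
    (a : Fin d → ℤ) (q : ℕ) (hq : 0 < q)
    (hgcd : Nat.gcd (Finset.univ.gcd fun i => (a i).natAbs) q = 1) :
    Nat.gcd (Finset.univ.gcd fun i => (V.mulVec a i).natAbs) q ≤ V.det.natAbs :=
  stmt_1_general d V hV a q hgcd
end

section
/- Suppose there exist nonzero v, w ∈ ℤ^d and a matrix A(x) ∈ M_{d×d}(ℤ[x]) such that vᵗ·A(x)·w is a constant polynomial. Then the set {A(n) : n ∈ ℤ} is not Glasner for the action on 𝕋^d: there exists an infinite set Y ⊆ 𝕋^d and ε > 0 such that for every n ∈ ℤ the set A(n)Y = {A(n)y : y ∈ Y} is not ε-dense in 𝕋^d. -/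
open Polynomial Matrix

/-!
The functional `L y = ∑ i, v i • y i` on the torus is `(∑ i, |v i|)`-Lipschitz. Take for `Y`
a short segment `{t • w : 0 ≤ t ≤ δ}` of the line through `w`. Then `L (A(n) (t • w)) = t c`
stays within `1/4` of `0` for every `n`, whereas `L z = 1/2` for a suitable `z`, so every
point of `A(n) Y` is at distance at least `1 / (4 ∑ i, |v i|)` from `z`.
-/

lemma dist_sum_zsmul_le {ι E : Type*} [Fintype ι] [SeminormedAddCommGroup E]
    (v : ι → ℤ) (x y : ι → E) :
    dist (∑ i, v i • x i) (∑ i, v i • y i) ≤ (∑ i, |(v i : ℝ)|) * dist x y := by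
  rw [dist_eq_norm, ← Finset.sum_sub_distrib, Finset.sum_mul]
  refine (norm_sum_le _ _).trans (Finset.sum_le_sum fun i _ => ?_)
  rw [← smul_sub]
  calc ‖v i • (x i - y i)‖ ≤ ‖v i‖ * ‖x i - y i‖ := norm_zsmul_le _ _
    _ ≤ |(v i : ℝ)| * dist x y := by
      rw [Int.norm_eq_abs, ← dist_eq_norm]
      exact mul_le_mul_of_nonneg_left (dist_le_pi_dist x y i) (abs_nonneg _)

namespace AddCircle

variable {p : ℝ}

lemma sum_zsmul_coe {ι : Type*} [Fintype ι] (v : ι → ℤ) (x : ι → ℝ) :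
    ∑ i, v i • (x i : AddCircle p) = ((∑ i, (v i : ℝ) * x i : ℝ) : AddCircle p) := by
  simp only [← coe_zsmul, zsmul_eq_mul]
  exact (map_sum (QuotientAddGroup.mk' (AddSubgroup.zmultiples p)) _ _).symm

lemma le_dist_coe_half_period (hp : 0 < p) {s : ℝ} (hs : |s| ≤ p / 4) :
    p / 4 ≤ dist ((p / 2 : ℝ) : AddCircle p) (s : AddCircle p) := by
  have hs' : ‖(s : AddCircle p)‖ ≤ |s| := by
    rw [(norm_coe_eq_abs_iff p hp.ne').mpr (by rw [abs_of_pos hp]; linarith)]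
  have := norm_sub_norm_le ((p / 2 : ℝ) : AddCircle p) (s : AddCircle p)
  rw [norm_half_period_eq, abs_of_pos hp] at this
  rw [dist_eq_norm]
  linarith

lemma injOn_coe_mul (hp : 0 < p) {w δ : ℝ} (hw : w ≠ 0) (hδw : δ * |w| ≤ p / 2) :
    Set.InjOn (fun t : ℝ => ((t * w : ℝ) : AddCircle p)) (Set.Icc 0 δ) := by
  intro t ht s hs hts
  have hsmall : |(t - s) * w| ≤ |p| / 2 := by
    rw [abs_mul, abs_of_pos hp]
    exact le_trans (mul_le_mul_of_nonneg_right (abs_sub_le_of_nonneg_of_le ht.1 ht.2 hs.1 hs.2)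
      (abs_nonneg w)) hδw
  have hzero : |(t - s) * w| = 0 := by
    rw [← (norm_coe_eq_abs_iff p hp.ne').mpr hsmall, sub_mul, coe_sub]
    simp only at hts
    rw [hts, sub_self, norm_zero]
  simpa [sub_eq_zero, hw] using hzero

lemma infinite_image_Icc_coe_mul {ι : Type*} (hp : 0 < p) {w : ι → ℤ} {i : ι} (hw : w i ≠ 0)
    {δ : ℝ} (hδ : 0 < δ) (hδw : δ * |(w i : ℝ)| ≤ p / 2) :
    ((fun t : ℝ => fun j => ((t * w j : ℝ) : AddCircle p)) '' Set.Icc 0 δ).Infinite :=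
  (Set.Icc_infinite hδ).image <| Set.InjOn.of_comp (g := fun y => y i) <|
    injOn_coe_mul hp (Int.cast_ne_zero.mpr hw) hδw

lemma sum_zsmul_sum_zsmul_coe_mul {m n : Type*} [Fintype m] [Fintype n] (v : m → ℤ)
    (B : Matrix m n ℤ) (w : n → ℤ) (t : ℝ) :
    ∑ i, v i • ∑ j, B i j • ((t * w j : ℝ) : AddCircle p) =
      ((t * (v ⬝ᵥ B *ᵥ w : ℤ) : ℝ) : AddCircle p) := by
  simp only [sum_zsmul_coe]
  congr 1
  simp only [dotProduct, mulVec, Int.cast_sum, Int.cast_mul, Finset.mul_sum]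
  exact Finset.sum_congr rfl fun i _ => Finset.sum_congr rfl fun j _ => by ring

end AddCircle

lemma dotProduct_map_eval_mulVec {m n R : Type*} [Fintype m] [Fintype n] [CommRing R]
    {A : Matrix m n R[X]} {v : m → R} {w : n → R} {c : R}
    (hc : (fun i => C (v i)) ⬝ᵥ A *ᵥ (fun j => C (w j)) = C c) (x : R) :
    v ⬝ᵥ A.map (eval x) *ᵥ w = c := by
  have := congrArg (evalRingHom x) hc
  simp only [RingHom.map_dotProduct, Function.comp_def, RingHom.map_mulVec] at this
  simpa using this

local notation "𝕋" => AddCircle (1 : ℝ)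

/-- if `vᵗ A(x) w` is a constant polynomial for some nonzero
integer vectors `v, w`, then `{A(n) : n ∈ ℤ}` is not Glasner for the action
on `𝕋^d`. -/
theorem stmt_5 (d : ℕ) (A : Matrix (Fin d) (Fin d) (Polynomial ℤ))
    (v w : Fin d → ℤ) (hv : v ≠ 0) (hw : w ≠ 0)
    (hconst : ∃ c : ℤ,
      (fun i => C (v i)) ⬝ᵥ A.mulVec (fun j => C (w j)) = C c) :
    ∃ Y : Set (Fin d → AddCircle (1 : ℝ)), Y.Infinite ∧
      ∃ ε > (0 : ℝ), ∀ n : ℤ, ∃ z : Fin d → AddCircle (1 : ℝ),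
        ∀ y ∈ Y, ε < dist z (fun i => ∑ j, ((A.map (eval n)) i j) • y j) := by
  obtain ⟨c, hc⟩ := hconst
  obtain ⟨i₀, hi₀⟩ := Function.ne_iff.mp hw
  obtain ⟨i₁, hi₁⟩ := Function.ne_iff.mp hv
  set δ : ℝ := 1 / (4 * (|(c : ℝ)| + |(w i₀ : ℝ)| + 1))
  have hδ : 0 < δ := by positivity
  have hδcw : δ * (|(c : ℝ)| + |(w i₀ : ℝ)|) ≤ 1 / 4 := by
    rw [div_mul_eq_mul_div, one_mul, div_le_div_iff₀ (by positivity) (by norm_num)]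
    linarith
  set M : ℝ := ∑ i, |(v i : ℝ)|
  set z : Fin d → 𝕋 := fun i => ((Pi.single i₁ (1 / (2 * v i₁)) : Fin d → ℝ) i : 𝕋)
  refine ⟨_, AddCircle.infinite_image_Icc_coe_mul one_pos hi₀ hδ
    (by nlinarith [abs_nonneg (c : ℝ)]), 1 / (4 * (M + 1)), by positivity, fun n => ⟨z, ?_⟩⟩
  rintro _ ⟨t, ht, rfl⟩
  set g : Fin d → 𝕋 := fun i => ∑ j, (A.map (eval n)) i j • ((t * w j : ℝ) : 𝕋)
  have hz : ∑ i, v i • z i = ((1 / 2 : ℝ) : 𝕋) := by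
    rw [AddCircle.sum_zsmul_coe, ← dotProduct, dotProduct_single]
    field_simp [Int.cast_ne_zero.mpr hi₁]
  have hg : ∑ i, v i • g i = ((t * c : ℝ) : 𝕋) := by
    simpa only [dotProduct_map_eval_mulVec hc] using
      AddCircle.sum_zsmul_sum_zsmul_coe_mul v (A.map (eval n)) w t
  have htc : |t * c| ≤ 1 / 4 := by
    rw [abs_mul, abs_of_nonneg ht.1]
    nlinarith [abs_nonneg (c : ℝ), abs_nonneg (w i₀ : ℝ), ht.2]
  have key : 1 / 4 ≤ M * dist z g :=
    calc (1 : ℝ) / 4 ≤ dist ((1 / 2 : ℝ) : 𝕋) ((t * c : ℝ) : 𝕋) := by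
          simpa using AddCircle.le_dist_coe_half_period one_pos (by simpa using htc)
      _ ≤ M * dist z g := hz ▸ hg ▸ dist_sum_zsmul_le v z g
  have hM : 0 ≤ M := by positivity
  rw [div_lt_iff₀ (by positivity)]
  nlinarith [dist_nonneg (x := z) (y := g)]
end

section
/- Let d > 1 and Γ = ⟨S⟩ ≤ SL_d(ℤ) act irreducibly on ℝ^d, with S_r the set of products of at most r elements of S. Then for every nonzero v ∈ ℝ^d, the set S_d·v is hyperplane-fleeing: it is not contained in any proper affine subspace W + a of ℝ^d. -/
/-!
Let `U_r` be the direction of the affine span of `B_r v`, where `B_r` is the ball of radius `r`.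
The `U_r` increase with `r`, and `ρ s` maps `U_r` into `U_{r+1}` for `s ∈ S` because
`s B_r ⊆ B_{r+1}`. If `U_n ≠ ⊤` for `n = dim V`, the chain stalls, `U_{r+1} = U_r`, at some
`r < n`; then `U_r` is `S`-invariant, hence `Γ`-invariant, so `U_r = ⊥` or `U_r = ⊤`. The
latter contradicts `U_r ≤ U_n`; the former makes every `s ∈ S` fix `v`, so that the line
through `v` is `Γ`-invariant, which is impossible when `n > 1`.
-/

open Matrix

/-- The action of an integral matrix group element on `ℝ^d`. -/
noncomputable def sl_act {d : ℕ} (g : Matrix.SpecialLinearGroup (Fin d) ℤ)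
    (v : Fin d → ℝ) : Fin d → ℝ :=
  ((g : Matrix (Fin d) (Fin d) ℤ).map (Int.cast : ℤ → ℝ)).mulVec v

/-- The ball of radius `r` in the Cayley graph: products of at most `r`
elements of `S` (including the identity as the empty product). -/
def cayleyBall {d : ℕ} (S : Set (Matrix.SpecialLinearGroup (Fin d) ℤ))
    (r : ℕ) : Set (Matrix.SpecialLinearGroup (Fin d) ℤ) :=
  {g | ∃ l : List (Matrix.SpecialLinearGroup (Fin d) ℤ),
    l.length ≤ r ∧ (∀ x ∈ l, x ∈ S) ∧ l.prod = g}

open Module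

section Invariance

variable {K V G : Type*} [Field K] [AddCommGroup V] [Module K V] [FiniteDimensional K V]
  [Group G] (ρ : Representation K G V)

namespace Representation

/-- In finite dimension an injective endomorphism maps an invariant subspace onto itself. -/
lemma mem_invtSubmodule_inv {U : Submodule K V} {g : G}
    (h : U ∈ Module.End.invtSubmodule (ρ g)) : U ∈ Module.End.invtSubmodule (ρ g⁻¹) := by
  let e : V ≃ₗ[K] V := LinearEquiv.ofLinearMap (ρ g) (ρ g⁻¹)
    (by rw [← Module.End.mul_eq_comp, ← map_mul, mul_inv_cancel, map_one, Module.End.one_eq_id])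
    (by rw [← Module.End.mul_eq_comp, ← map_mul, inv_mul_cancel, map_one, Module.End.one_eq_id])
  have hmap : U.map (ρ g) = U :=
    Submodule.eq_of_le_of_finrank_eq ((Module.End.mem_invtSubmodule_iff_map_le _).mp h)
      (e.finrank_map_eq U)
  exact Module.End.mem_invtSubmodule_symm_iff_le_map (f := e) |>.mpr hmap.ge

lemma mem_invtSubmodule_of_mem_closure {S : Set G} {U : Submodule K V}
    (hS : ∀ s ∈ S, U ∈ Module.End.invtSubmodule (ρ s)) {g : G}
    (hg : g ∈ Subgroup.closure S) : U ∈ Module.End.invtSubmodule (ρ g) := by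
  induction hg using Subgroup.closure_induction with
  | mem s hs => exact hS s hs
  | one => simp
  | mul a b _ _ ha hb => rw [map_mul]; exact Module.End.invtSubmodule.comp _ ha hb
  | inv a _ ha => exact mem_invtSubmodule_inv ρ ha

lemma exists_apply_ne {S : Set G}
    (hirr : ∀ U : Submodule K V,
      (∀ g ∈ Subgroup.closure S, U ∈ Module.End.invtSubmodule (ρ g)) → U = ⊥ ∨ U = ⊤)
    (hV : 1 < finrank K V) {v : V} (hv : v ≠ 0) : ∃ s ∈ S, ρ s v ≠ v := by
  by_contra! hfix
  have hinv : ∀ s ∈ S, (K ∙ v) ∈ Module.End.invtSubmodule (ρ s) := fun s hs =>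
    (Module.End.mem_invtSubmodule_iff_map_le _).mpr <| by
      rw [Submodule.map_span, Set.image_singleton, hfix s hs]
  rcases hirr _ fun _ hg => mem_invtSubmodule_of_mem_closure ρ hinv hg with hbot | htop
  · exact hv (Submodule.span_singleton_eq_bot.mp hbot)
  · have := finrank_span_singleton (K := K) hv
    rw [htop, finrank_top] at this
    omega

end Representation

lemma Submodule.exists_succ_eq_of_finrank_lt {U : ℕ → Submodule K V} (hU : Monotone U) {n : ℕ}
    (hn : finrank K (U n) < n) : ∃ r < n, U (r + 1) = U r := by
  by_contra! hstrict
  have hrank : ∀ r ≤ n, r ≤ finrank K (U r) := by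
    intro r hr
    induction r with
    | zero => exact Nat.zero_le _
    | succ r ih =>
      have hlt : U r < U (r + 1) := lt_of_le_of_ne (hU r.le_succ) (hstrict r hr).symm
      have := Submodule.finrank_lt_finrank_of_lt hlt
      have := ih (by omega)
      omega
  have := hrank n le_rfl
  omega

end Invariance

section CayleyBall

variable {d : ℕ} {S : Set (SpecialLinearGroup (Fin d) ℤ)}

lemma one_mem_cayleyBall (r : ℕ) : 1 ∈ cayleyBall S r :=
  ⟨[], by simp, by simp, rfl⟩

lemma mul_mem_cayleyBall {r : ℕ} {s g : SpecialLinearGroup (Fin d) ℤ} (hs : s ∈ S)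
    (hg : g ∈ cayleyBall S r) : s * g ∈ cayleyBall S (r + 1) := by
  obtain ⟨l, hlen, hlS, rfl⟩ := hg
  exact ⟨s :: l, by simpa using hlen, by simpa [hs] using hlS, List.prod_cons⟩

lemma mem_cayleyBall_of_mem {r : ℕ} {s : SpecialLinearGroup (Fin d) ℤ} (hs : s ∈ S) :
    s ∈ cayleyBall S (r + 1) := by
  simpa using mul_mem_cayleyBall hs (one_mem_cayleyBall r)

lemma cayleyBall_mono : Monotone (cayleyBall S) := by
  rintro r r' hr g ⟨l, hlen, hlS, hl⟩
  exact ⟨l, hlen.trans hr, hlS, hl⟩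

end CayleyBall

section BallOrbit

variable {K V : Type*} [Field K] [AddCommGroup V] [Module K V] {d : ℕ}
  (ρ : Representation K (SpecialLinearGroup (Fin d) ℤ) V)
  (S : Set (SpecialLinearGroup (Fin d) ℤ)) (v : V)

def ballOrbitSpan (r : ℕ) : Submodule K V :=
  vectorSpan K ((ρ · v) '' cayleyBall S r)

lemma ballOrbitSpan_mono : Monotone (ballOrbitSpan ρ S v) := fun _ _ hr =>
  vectorSpan_mono K (Set.image_mono (cayleyBall_mono hr))

variable {S}

lemma map_ballOrbitSpan_le {s : SpecialLinearGroup (Fin d) ℤ} (hs : s ∈ S) (r : ℕ) :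
    (ballOrbitSpan ρ S v r).map (ρ s) ≤ ballOrbitSpan ρ S v (r + 1) := by
  have := (ρ s).toAffineMap.map_vectorSpan (s := (ρ · v) '' cayleyBall S r)
  rw [LinearMap.toAffineMap_linear] at this
  rw [ballOrbitSpan, this, Set.image_image]
  refine vectorSpan_mono K ?_
  rintro _ ⟨g, hg, rfl⟩
  exact ⟨s * g, mul_mem_cayleyBall hs hg, by simp⟩

lemma ballOrbitSpan_mem_invtSubmodule [FiniteDimensional K V] {r : ℕ}
    (hstab : ballOrbitSpan ρ S v (r + 1) = ballOrbitSpan ρ S v r)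
    {g : SpecialLinearGroup (Fin d) ℤ} (hg : g ∈ Subgroup.closure S) :
    ballOrbitSpan ρ S v r ∈ Module.End.invtSubmodule (ρ g) :=
  Representation.mem_invtSubmodule_of_mem_closure ρ
    (fun _ hs => (Module.End.mem_invtSubmodule_iff_map_le _).mpr
      (hstab ▸ map_ballOrbitSpan_le ρ v hs r)) hg

lemma apply_eq_of_ballOrbitSpan_eq_bot {r : ℕ} (hbot : ballOrbitSpan ρ S v (r + 1) = ⊥)
    {s : SpecialLinearGroup (Fin d) ℤ} (hs : s ∈ S) : ρ s v = v := by
  have hsub := (vectorSpan_eq_bot_iff_subsingleton K).mp hbot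
  simpa using hsub ⟨s, mem_cayleyBall_of_mem hs, rfl⟩ ⟨1, one_mem_cayleyBall _, rfl⟩

theorem ballOrbitSpan_finrank_eq_top [FiniteDimensional K V]
    (hirr : ∀ U : Submodule K V,
      (∀ g ∈ Subgroup.closure S, U ∈ Module.End.invtSubmodule (ρ g)) → U = ⊥ ∨ U = ⊤)
    (hV : 1 < finrank K V) (hv : v ≠ 0) : ballOrbitSpan ρ S v (finrank K V) = ⊤ := by
  by_contra hne
  obtain ⟨r, hr, hstab⟩ := Submodule.exists_succ_eq_of_finrank_lt (ballOrbitSpan_mono ρ S v)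
    (Submodule.finrank_lt hne)
  rcases hirr _ fun g hg => ballOrbitSpan_mem_invtSubmodule ρ v hstab hg with hbot | htop
  · obtain ⟨s, hs, hsv⟩ := Representation.exists_apply_ne ρ hirr hV hv
    exact hsv (apply_eq_of_ballOrbitSpan_eq_bot ρ v (hstab.trans hbot) hs)
  · exact hne (top_le_iff.mp (htop ▸ ballOrbitSpan_mono ρ S v hr.le))

end BallOrbit

noncomputable def slRep (d : ℕ) :
    Representation ℝ (SpecialLinearGroup (Fin d) ℤ) (Fin d → ℝ) :=
  Matrix.toLinAlgEquiv'.toMonoidHom.comp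
    (SpecialLinearGroup.coeMonoidHom.comp (SpecialLinearGroup.map (Int.castRingHom ℝ)))

lemma slRep_apply {d : ℕ} (g : SpecialLinearGroup (Fin d) ℤ) (v : Fin d → ℝ) :
    slRep d g v = sl_act g v := rfl

/-- if `d > 1` and `Γ = ⟨S⟩ ≤ SL_d(ℤ)` acts irreducibly on `ℝ^d`,
then for every nonzero `v` the set `S_d v` is hyperplane-fleeing. -/
theorem stmt_9 (d : ℕ) (hd : 1 < d) (S : Set (Matrix.SpecialLinearGroup (Fin d) ℤ))
    (hirr : ∀ W : Submodule ℝ (Fin d → ℝ),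
      (∀ g ∈ Subgroup.closure S, ∀ x ∈ W, sl_act g x ∈ W) → W = ⊥ ∨ W = ⊤)
    (v : Fin d → ℝ) (hv : v ≠ 0) :
    ¬∃ (W : Submodule ℝ (Fin d → ℝ)) (a : Fin d → ℝ), W ≠ ⊤ ∧
      ∀ g ∈ cayleyBall S d, sl_act g v - a ∈ W := by
  rintro ⟨W, a, hW, hball⟩
  have hspan : ballOrbitSpan (slRep d) S v d = ⊤ := by
    simpa using ballOrbitSpan_finrank_eq_top (slRep d) v
      (fun U hU => hirr U fun g hg _ hx => hU g hg hx) (by simpa using hd) hv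
  have hsub : (slRep d · v) '' cayleyBall S d ⊆ AffineSubspace.mk' a W := by
    rintro _ ⟨g, hg, rfl⟩
    simpa only [SetLike.mem_coe, AffineSubspace.mem_mk', vsub_eq_sub, slRep_apply]
      using hball g hg
  have hle : ballOrbitSpan (slRep d) S v d ≤ W :=
    (vectorSpan_mono ℝ hsub).trans_eq (AffineSubspace.direction_mk' a W)
  exact hW (top_le_iff.mp (hspan ▸ hle))
end

section
/- Let f(x) ∈ ℝ[x] be a polynomial having at least one irrational coefficient in a degree ≥ 1 term. Then lim_{N→∞} (1/N) ∑_{n=1}^{N} e(f(n)) = 0, where e(t) = exp(2πit). -/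
/-!
For `f` of degree `d ≥ 2` with irrational leading coefficient `a`, the correlations
`e(f(n+k)) · conj (e(f(n))) = e(f(n+k) - f(n))` come from a polynomial of degree `d - 1` whose
leading coefficient `d k a` is again irrational, so van der Corput's inequality reduces the theorem
to the linear case, where the exponential sums are bounded geometric sums.

In general write `f = g + r`, where `g` collects the terms of `f` up to its highest irrational
coefficient and `r` has rational coefficients. If `q` clears the denominators of `r`, then `r(n)`
is constant modulo `1` on each residue class `n = q m + s`, and `m ↦ g(q m + s)` is a polynomial
with irrational leading coefficient; the averages over the residue classes combine to the whole.
-/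

open Polynomial Filter Finset Topology ComplexConjugate

namespace Weyl

section Mean

variable {E : Type*} [SeminormedAddCommGroup E]

def HasZeroMean (u : ℕ → E) : Prop :=
  Tendsto (fun N : ℕ => ‖∑ n ∈ range N, u n‖ / N) atTop (𝓝 0)

lemma HasZeroMean.of_norm_sum_le {u : ℕ → E} (C : ℝ)
    (h : ∀ N, ‖∑ n ∈ range N, u n‖ ≤ C) : HasZeroMean u :=
  squeeze_zero (fun _ => by positivity)
    (fun N => div_le_div_of_nonneg_right (h N) N.cast_nonneg)
    (tendsto_const_div_atTop_nhds_zero_nat C)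

lemma norm_sum_le_card {u : ℕ → E} (hu : ∀ n, ‖u n‖ ≤ 1) (s : Finset ℕ) :
    ‖∑ n ∈ s, u n‖ ≤ #s := by
  simpa using norm_sum_le_of_le s fun n _ => hu n

lemma norm_sum_range_add_sub_le {u : ℕ → E} (hu : ∀ n, ‖u n‖ ≤ 1) (c N : ℕ) :
    ‖∑ n ∈ range N, u (n + c) - ∑ n ∈ range N, u n‖ ≤ 2 * c := by
  have hsplit := (sum_range_add u c N).symm.trans (add_comm c N ▸ sum_range_add u N c)
  have hdiff : ∑ n ∈ range N, u (n + c) - ∑ n ∈ range N, u n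
      = ∑ n ∈ range c, u (N + n) - ∑ n ∈ range c, u n := by
    rw [sub_eq_sub_iff_add_eq_add]
    simp_rw [add_comm _ c]
    rw [add_comm, hsplit, add_comm]
  rw [hdiff, two_mul]
  refine (norm_sub_le _ _).trans (add_le_add ?_ ?_)
  · simpa using norm_sum_le_card (fun n => hu (N + n)) (range c)
  · simpa using norm_sum_le_card hu (range c)

lemma HasZeroMean.comp_add_right {u : ℕ → E} (hu : ∀ n, ‖u n‖ ≤ 1) (h : HasZeroMean u)
    (c : ℕ) : HasZeroMean fun n => u (n + c) := by
  refine squeeze_zero (fun _ => by positivity) (fun N => ?_)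
    (by simpa using h.add (tendsto_const_div_atTop_nhds_zero_nat (2 * c : ℝ)))
  rw [← add_div]
  gcongr
  exact (norm_le_norm_add_norm_sub' _ (∑ n ∈ range N, u n)).trans
    (add_le_add le_rfl (norm_sum_range_add_sub_le hu c N))

lemma HasZeroMean.const_mul {R : Type*} [SeminormedRing R] {u : ℕ → R} (h : HasZeroMean u)
    (c : R) : HasZeroMean fun n => c * u n := by
  refine squeeze_zero (fun _ => by positivity) (fun N => ?_)
    (by simpa using Tendsto.const_mul ‖c‖ h)
  rw [← mul_sum, ← mul_div_assoc]
  gcongr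
  exact norm_mul_le _ _

lemma norm_sum_range_le_sum_progressions {u : ℕ → E} (hu : ∀ n, ‖u n‖ ≤ 1) {q : ℕ}
    (hq : 0 < q) (N : ℕ) :
    ‖∑ n ∈ range N, u n‖ ≤ ∑ s ∈ range q, ‖∑ m ∈ range (N / q), u (q * m + s)‖ + q := by
  have hblocks : ∀ M,
      ∑ n ∈ range (q * M), u n = ∑ s ∈ range q, ∑ m ∈ range M, u (q * m + s) := by
    intro M
    induction M with
    | zero => simp
    | succ M ih =>
      rw [mul_add_one, sum_range_add, ih, ← sum_add_distrib]
      exact sum_congr rfl fun s _ => (sum_range_succ _ M).symm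
  conv_lhs => rw [← Nat.div_add_mod N q, sum_range_add, hblocks]
  refine (norm_add_le _ _).trans (add_le_add (norm_sum_le _ _) ?_)
  exact (norm_sum_le_card (fun _ => hu _) _).trans (by simpa using (Nat.mod_lt N hq).le)

lemma HasZeroMean.of_progressions {u : ℕ → E} (hu : ∀ n, ‖u n‖ ≤ 1) {q : ℕ} (hq : 0 < q)
    (h : ∀ s < q, HasZeroMean fun m => u (q * m + s)) : HasZeroMean u := by
  have hlim : Tendsto (fun N : ℕ => ∑ s ∈ range q,
      ‖∑ m ∈ range (N / q), u (q * m + s)‖ / (N / q : ℕ) + q / N) atTop (𝓝 0) := by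
    simpa using (tendsto_finsetSum _ fun s hs => (h s (mem_range.1 hs)).comp
      (Nat.tendsto_div_const_atTop hq.ne')).add
      (tendsto_const_div_atTop_nhds_zero_nat (q : ℝ))
  refine squeeze_zero' (.of_forall fun _ => by positivity) ?_ hlim
  filter_upwards [eventually_ge_atTop q] with N hN
  have hM : 0 < N / q := Nat.div_pos hN hq
  calc ‖∑ n ∈ range N, u n‖ / N
      ≤ (∑ s ∈ range q, ‖∑ m ∈ range (N / q), u (q * m + s)‖ + q) / N := by
        gcongr; exact norm_sum_range_le_sum_progressions hu hq N
    _ ≤ _ := by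
        rw [add_div, sum_div]
        gcongr with s
        exact Nat.div_le_self N q

end Mean

section Exponential

noncomputable def e (t : ℝ) : ℂ := Complex.exp (2 * Real.pi * Complex.I * t)

lemma norm_e (t : ℝ) : ‖e t‖ = 1 := by
  rw [e, show 2 * Real.pi * Complex.I * t = ((2 * Real.pi * t : ℝ) : ℂ) * Complex.I by
    push_cast; ring]
  exact Complex.norm_exp_ofReal_mul_I _

lemma e_add (s t : ℝ) : e (s + t) = e s * e t := by
  simp only [e, ← Complex.exp_add]; push_cast; ring_nf

lemma e_natCast_mul (n : ℕ) (t : ℝ) : e (n * t) = e t ^ n := by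
  simp only [e, ← Complex.exp_nat_mul]; push_cast; ring_nf

lemma e_mul_conj_e (s t : ℝ) : e s * conj (e t) = e (s - t) := by
  simp only [e, ← Complex.exp_conj, ← Complex.exp_add, map_mul, Complex.conj_ofReal,
    Complex.conj_I, map_ofNat]
  push_cast; ring_nf

lemma e_eq_one_iff (t : ℝ) : e t = 1 ↔ ∃ z : ℤ, t = z := by
  rw [e, Complex.exp_eq_one_iff]
  refine exists_congr fun z => ⟨fun h => ?_, fun h => by rw [h]; push_cast; ring⟩
  have h2pi : (2 * Real.pi * Complex.I : ℂ) ≠ 0 := by simp [Real.pi_ne_zero]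
  exact_mod_cast mul_left_cancel₀ h2pi (h.trans (mul_comm _ _))

lemma e_intCast (z : ℤ) : e z = 1 := (e_eq_one_iff _).2 ⟨z, rfl⟩

lemma hasZeroMean_e_linear {α : ℝ} (hα : Irrational α) (β : ℝ) :
    HasZeroMean fun n : ℕ => e (α * n + β) := by
  have hne : e α - 1 ≠ 0 := sub_ne_zero.2 fun h => by
    obtain ⟨z, hz⟩ := (e_eq_one_iff α).1 h
    exact hα.ne_int z hz
  refine .of_norm_sum_le (2 / ‖e α - 1‖) fun N => ?_
  have hgeom : ∑ n ∈ range N, e (α * n + β) = e β * ((e α ^ N - 1) / (e α - 1)) := by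
    simp_rw [e_add, mul_comm α, e_natCast_mul, ← sum_mul, geom_sum_eq (sub_ne_zero.1 hne)]
    ring
  rw [hgeom, norm_mul, norm_e, one_mul, norm_div]
  gcongr
  exact (norm_sub_le _ _).trans (by norm_num [norm_e])

end Exponential

section VanDerCorput

lemma mul_norm_sum_le_norm_sum_window_add {E : Type*} [NormedAddCommGroup E]
    [NormedSpace ℝ E] {u : ℕ → E} (hu : ∀ n, ‖u n‖ ≤ 1) (H N : ℕ) :
    H * ‖∑ n ∈ range N, u n‖ ≤ ‖∑ n ∈ range N, ∑ h ∈ range H, u (n + h)‖ + 2 * H ^ 2 := by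
  set S := ∑ n ∈ range N, u n
  have hshift : ∀ h ∈ range H, ‖S - ∑ n ∈ range N, u (n + h)‖ ≤ 2 * H := by
    intro h hh
    rw [norm_sub_rev]
    exact (norm_sum_range_add_sub_le hu h N).trans (by gcongr; exact (mem_range.1 hh).le)
  calc (H : ℝ) * ‖S‖ = ‖∑ _h ∈ range H, S‖ := by
        rw [sum_const, card_range, RCLike.norm_nsmul ℝ, nsmul_eq_mul]
    _ ≤ ‖∑ h ∈ range H, ∑ n ∈ range N, u (n + h)‖
          + ‖∑ h ∈ range H, (S - ∑ n ∈ range N, u (n + h))‖ := by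
        rw [sum_sub_distrib]; exact norm_le_norm_add_norm_sub' _ _
    _ ≤ ‖∑ n ∈ range N, ∑ h ∈ range H, u (n + h)‖ + ∑ _h ∈ range H, 2 * (H : ℝ) := by
        rw [sum_comm]; gcongr; exact (norm_sum_le _ _).trans (sum_le_sum hshift)
    _ = _ := by rw [sum_const, card_range, nsmul_eq_mul]; ring

lemma sum_norm_sq_sum_range_le (u : ℕ → ℂ) (H N : ℕ) :
    ∑ n ∈ range N, ‖∑ h ∈ range H, u (n + h)‖ ^ 2
      ≤ ∑ h ∈ range H, ∑ h' ∈ range H, ‖∑ n ∈ range N, u (n + h) * conj (u (n + h'))‖ := by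
  have hexpand : ((∑ n ∈ range N, ‖∑ h ∈ range H, u (n + h)‖ ^ 2 : ℝ) : ℂ)
      = ∑ h ∈ range H, ∑ h' ∈ range H, ∑ n ∈ range N, u (n + h) * conj (u (n + h')) := by
    push_cast
    simp_rw [← Complex.mul_conj', map_sum, sum_mul_sum]
    rw [sum_comm]
    exact sum_congr rfl fun _ _ => sum_comm
  calc ∑ n ∈ range N, ‖∑ h ∈ range H, u (n + h)‖ ^ 2
      = (∑ h ∈ range H, ∑ h' ∈ range H,
          ∑ n ∈ range N, u (n + h) * conj (u (n + h'))).re := by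
        rw [← hexpand, Complex.ofReal_re]
    _ ≤ _ := (Complex.re_le_norm _).trans
        ((norm_sum_le _ _).trans (sum_le_sum fun _ _ => norm_sum_le _ _))

variable {u : ℕ → ℂ}

lemma norm_mul_conj_le_one (hu : ∀ n, ‖u n‖ ≤ 1) (a b : ℕ) : ‖u a * conj (u b)‖ ≤ 1 := by
  rw [norm_mul, Complex.norm_conj]
  exact mul_le_one₀ (hu a) (norm_nonneg _) (hu b)

lemma norm_sum_mul_conj_add_le (hu : ∀ n, ‖u n‖ ≤ 1) (a k N : ℕ) :
    ‖∑ n ∈ range N, u (n + a + k) * conj (u (n + a))‖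
      ≤ ‖∑ n ∈ range N, u (n + k) * conj (u n)‖ + 2 * a := by
  have hv := norm_sum_range_add_sub_le (u := fun n => u (n + k) * conj (u n))
    (fun n => norm_mul_conj_le_one hu _ _) a N
  exact (norm_le_norm_add_norm_sub' _ _).trans (add_le_add le_rfl hv)

lemma norm_sum_mul_conj_le (hu : ∀ n, ‖u n‖ ≤ 1) {H h h' : ℕ} (hh : h < H) (hh' : h' < H)
    (N : ℕ) :
    ‖∑ n ∈ range N, u (n + h) * conj (u (n + h'))‖
      ≤ (if h = h' then (N : ℝ) else 0)
        + ∑ k ∈ Ico 1 H, ‖∑ n ∈ range N, u (n + k) * conj (u n)‖ + 2 * H := by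
  have hoff : ∀ a b, a < b → b < H → ‖∑ n ∈ range N, u (n + b) * conj (u (n + a))‖
      ≤ ∑ k ∈ Ico 1 H, ‖∑ n ∈ range N, u (n + k) * conj (u n)‖ + 2 * H := by
    intro a b hab hb
    obtain ⟨k, rfl⟩ := Nat.exists_eq_add_of_lt hab
    have hk : k + 1 ∈ Ico 1 H := mem_Ico.2 ⟨by omega, by omega⟩
    have hshift := norm_sum_mul_conj_add_le hu a (k + 1) N
    simp only [add_assoc] at hshift ⊢
    refine hshift.trans (add_le_add ?_ ?_)
    · exact single_le_sum (f := fun k => ‖∑ n ∈ range N, u (n + k) * conj (u n)‖)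
        (fun _ _ => norm_nonneg _) hk
    · gcongr; omega
  rcases lt_trichotomy h h' with hlt | rfl | hgt
  · have hconj : ‖∑ n ∈ range N, u (n + h) * conj (u (n + h'))‖
        = ‖∑ n ∈ range N, u (n + h') * conj (u (n + h))‖ := by
      rw [← Complex.norm_conj, map_sum]
      simp_rw [map_mul, Complex.conj_conj, mul_comm]
    rw [hconj, if_neg hlt.ne, zero_add]
    exact hoff h h' hlt hh'
  · rw [if_pos rfl]
    have := norm_sum_le_card (fun n => norm_mul_conj_le_one hu (n + h) (n + h)) (range N)
    rw [card_range] at this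
    linarith [sum_nonneg fun k (_ : k ∈ Ico 1 H) =>
      norm_nonneg (∑ n ∈ range N, u (n + k) * conj (u n))]
  · rw [if_neg hgt.ne', zero_add]
    exact hoff h' h hgt hh

lemma norm_sum_div_le_vanDerCorput (hu : ∀ n, ‖u n‖ ≤ 1) {H N : ℕ} (hH : 0 < H) (hN : 0 < N) :
    ‖∑ n ∈ range N, u n‖ / N ≤ 2 * H / N
      + √(1 / H + 2 * H / N
          + ∑ k ∈ Ico 1 H, ‖∑ n ∈ range N, u (n + k) * conj (u n)‖ / N) := by
  -- `H • ∑ u` is `∑ b` up to `2 H²`; Cauchy–Schwarz and expanding `‖b n‖²` bound `‖∑ b‖²`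
  -- by the correlation sums.
  set c := ∑ k ∈ Ico 1 H, ‖∑ n ∈ range N, u (n + k) * conj (u n)‖
  set b := fun n => ∑ h ∈ range H, u (n + h)
  have hNpos : (0 : ℝ) < N := by exact_mod_cast hN
  have hB : ‖∑ n ∈ range N, b n‖ ^ 2 ≤ N * (H * N + H ^ 2 * (c + 2 * H)) :=
    calc ‖∑ n ∈ range N, b n‖ ^ 2 ≤ (∑ n ∈ range N, ‖b n‖) ^ 2 := by
          gcongr; exact norm_sum_le _ _
      _ ≤ N * ∑ n ∈ range N, ‖b n‖ ^ 2 := by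
          simpa using sq_sum_le_card_mul_sum_sq (s := range N) (f := fun n => ‖b n‖)
      _ ≤ N * ∑ h ∈ range H, ∑ h' ∈ range H,
            ((if h = h' then (N : ℝ) else 0) + c + 2 * H) := by
          gcongr
          refine (sum_norm_sq_sum_range_le u H N).trans (sum_le_sum fun h hh => ?_)
          exact sum_le_sum fun h' hh' =>
            norm_sum_mul_conj_le hu (mem_range.1 hh) (mem_range.1 hh') N
      _ = N * (H * N + H ^ 2 * (c + 2 * H)) := by
          have hrow : ∀ h ∈ range H, ∑ h' ∈ range H,
              ((if h = h' then (N : ℝ) else 0) + c + 2 * H) = N + H * (c + 2 * H) :=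
            fun h hh => by simp [sum_add_distrib, hh]; ring
          rw [sum_congr rfl hrow, sum_const, card_range, nsmul_eq_mul]
          ring
  have hsqrt : ‖∑ n ∈ range N, b n‖ / (H * N) ≤ √(1 / H + 2 * H / N + c / N) := by
    rw [Real.le_sqrt (by positivity) (by positivity), div_pow, div_le_iff₀ (by positivity)]
    refine hB.trans (le_of_eq ?_)
    field_simp
    ring
  calc ‖∑ n ∈ range N, u n‖ / N ≤ (‖∑ n ∈ range N, b n‖ + 2 * H ^ 2) / (H * N) := by
        rw [div_le_div_iff₀ hNpos (by positivity)]
        have := mul_le_mul_of_nonneg_right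
          (mul_norm_sum_le_norm_sum_window_add hu H N) hNpos.le
        linarith
    _ = 2 * H / N + ‖∑ n ∈ range N, b n‖ / (H * N) := by
        field_simp
        ring
    _ ≤ _ := by
        rw [← sum_div]
        gcongr

theorem HasZeroMean.of_mul_conj (hu : ∀ n, ‖u n‖ ≤ 1)
    (h : ∀ k, 0 < k → HasZeroMean fun n => u (n + k) * conj (u n)) : HasZeroMean u := by
  refine tendsto_order.2 ⟨fun a ha => .of_forall fun N => ha.trans_le (by positivity),
    fun ε hε => ?_⟩
  obtain ⟨H, hH⟩ := exists_nat_gt (1 / ε ^ 2)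
  have hHpos : (0 : ℝ) < H := lt_trans (by positivity) hH
  have hlim : Tendsto (fun N : ℕ => 2 * H / N + √(1 / H + 2 * H / N
      + ∑ k ∈ Ico 1 H, ‖∑ n ∈ range N, u (n + k) * conj (u n)‖ / N))
      atTop (𝓝 (0 + √(1 / H + 0 + 0))) :=
    (tendsto_const_div_atTop_nhds_zero_nat _).add
      (((tendsto_const_nhds.add (tendsto_const_div_atTop_nhds_zero_nat _)).add
        (by simpa using tendsto_finsetSum _ fun k hk => h k (mem_Ico.1 hk).1)).sqrt)
  have hsmall : 0 + √(1 / H + 0 + 0) < ε := by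
    rw [zero_add, add_zero, add_zero, Real.sqrt_lt' hε, div_lt_iff₀ hHpos]
    rw [div_lt_iff₀ (by positivity)] at hH
    linarith
  filter_upwards [hlim.eventually_lt_const hsmall, eventually_gt_atTop 0] with N hN hN0
  exact (norm_sum_div_le_vanDerCorput hu (Nat.cast_pos.1 hHpos) hN0).trans_lt hN

end VanDerCorput

section Polynomials

lemma natDegree_taylor_sub_self_le {R : Type*} [CommRing R] {f : R[X]} {d : ℕ}
    (hf : f.natDegree = d + 1) (r : R) : (taylor r f - f).natDegree ≤ d := by
  refine natDegree_le_iff_coeff_eq_zero.2 fun j hj => ?_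
  rcases (Nat.succ_le_of_lt hj).eq_or_lt with rfl | hj
  · rw [coeff_sub, Nat.succ_eq_add_one, ← hf, coeff_taylor_natDegree, leadingCoeff, sub_self]
  · rw [coeff_sub, coeff_eq_zero_of_natDegree_lt (by rwa [natDegree_taylor, hf]),
      coeff_eq_zero_of_natDegree_lt (by rwa [hf]), sub_self]

lemma coeff_taylor_sub_self {R : Type*} [CommRing R] {f : R[X]} {d : ℕ}
    (hf : f.natDegree = d + 1) (r : R) :
    (taylor r f - f).coeff d = (d + 1) * r * f.leadingCoeff := by
  have hlin : (hasseDeriv d f).natDegree ≤ 1 :=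
    (natDegree_hasseDeriv_le f d).trans (by omega)
  rw [coeff_sub, taylor_coeff, eq_X_add_C_of_natDegree_le_one hlin]
  simp [hasseDeriv_coeff, leadingCoeff, hf, add_comm 1 d, Nat.choose_succ_self_right]
  ring

lemma irrational_leadingCoeff_taylor_sub_self {f : ℝ[X]} {d : ℕ} (hf : f.natDegree = d + 1)
    (hlc : Irrational f.leadingCoeff) {k : ℕ} (hk : 0 < k) :
    (taylor (k : ℝ) f - f).natDegree = d ∧
      Irrational (taylor (k : ℝ) f - f).leadingCoeff := by
  have hcoeff : Irrational ((taylor (k : ℝ) f - f).coeff d) := by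
    rw [coeff_taylor_sub_self hf, ← Nat.cast_succ, ← Nat.cast_mul]
    exact hlc.natCast_mul (by positivity)
  have hdeg : (taylor (k : ℝ) f - f).natDegree = d :=
    (natDegree_taylor_sub_self_le hf _).antisymm (le_natDegree_of_ne_zero hcoeff.ne_zero)
  exact ⟨hdeg, by rwa [leadingCoeff, hdeg]⟩

theorem hasZeroMean_e_eval_of_irrational_leadingCoeff {f : ℝ[X]} (hdeg : 0 < f.natDegree)
    (hlc : Irrational f.leadingCoeff) : HasZeroMean fun n : ℕ => e (f.eval (n : ℝ)) := by
  obtain ⟨d, hd⟩ := Nat.exists_eq_add_one_of_ne_zero hdeg.ne'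
  induction d generalizing f with
  | zero =>
    have hf := eq_X_add_C_of_natDegree_le_one hd.le
    rw [leadingCoeff, hd] at hlc
    rw [hf]
    simpa using hasZeroMean_e_linear hlc (f.coeff 0)
  | succ d ih =>
    refine .of_mul_conj (fun n => (norm_e _).le) fun k hk => ?_
    obtain ⟨hgdeg, hglc⟩ := irrational_leadingCoeff_taylor_sub_self hd hlc hk
    convert ih (hgdeg ▸ d.succ_pos) hglc hgdeg using 2 with n
    rw [e_mul_conj_e, eval_sub, taylor_eval]
    push_cast
    rfl

lemma exists_intCast_eval_sub_eval {r : ℝ[X]}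
    (hr : ∀ i, r.coeff i ∈ Set.range ((↑) : ℚ → ℝ)) :
    ∃ q : ℕ, 0 < q ∧
      ∀ x y : ℤ, (q : ℤ) ∣ x - y → ∃ z : ℤ, r.eval (x : ℝ) - r.eval (y : ℝ) = z := by
  obtain ⟨r', rfl⟩ := (mem_lifts _).1 ((lifts_iff_coeff_lifts (f := Rat.castHom ℝ) r).2 hr)
  obtain ⟨b, hb, hR⟩ := IsLocalization.integerNormalization_spec (nonZeroDivisors ℤ) r'
  set R := IsLocalization.integerNormalization (nonZeroDivisors ℤ) r'
  have hb0 : b ≠ 0 := nonZeroDivisors.ne_zero hb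
  have hReval : ∀ x : ℤ, ((R.eval x : ℤ) : ℚ) = b * r'.eval (x : ℚ) := fun x => by
    simpa [eval_intCast_map] using congrArg (eval (x : ℚ)) hR
  refine ⟨b.natAbs, Int.natAbs_pos.2 hb0, fun x y hxy => ?_⟩
  obtain ⟨z, hz⟩ : b ∣ R.eval x - R.eval y :=
    (Int.natAbs_dvd.1 hxy).trans (sub_dvd_eval_sub x y R)
  refine ⟨z, ?_⟩
  have hq : r'.eval (x : ℚ) - r'.eval (y : ℚ) = z := by
    have := congrArg ((↑) : ℤ → ℚ) hz
    push_cast at this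
    rw [hReval, hReval] at this
    exact mul_left_cancel₀ (Int.cast_ne_zero.2 hb0) (by linear_combination this)
  simpa [eval_intCast_map] using congrArg ((↑) : ℚ → ℝ) hq

lemma exists_add_irrational_leadingCoeff {f : ℝ[X]}
    (hf : ∃ n, 1 ≤ n ∧ Irrational (f.coeff n)) :
    ∃ g r : ℝ[X], f = g + r ∧ 0 < g.natDegree ∧ Irrational g.leadingCoeff ∧
      ∀ i, r.coeff i ∈ Set.range ((↑) : ℚ → ℝ) := by
  classical
  obtain ⟨n, hn1, hn⟩ := hf
  have hnD : n ≤ f.natDegree := le_natDegree_of_ne_zero hn.ne_zero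
  set k := Nat.findGreatest (fun j => Irrational (f.coeff j)) f.natDegree
  have hk : Irrational (f.coeff k) :=
    Nat.findGreatest_spec (P := fun j => Irrational (f.coeff j)) hnD hn
  have hnk : n ≤ k := Nat.le_findGreatest hnD hn
  have hrat : ∀ j, k < j → f.coeff j ∈ Set.range ((↑) : ℚ → ℝ) := fun j hj => by
    by_cases hjD : j ≤ f.natDegree
    · exact not_not.1 (Nat.findGreatest_is_greatest hj hjD)
    · rw [coeff_eq_zero_of_natDegree_lt (not_le.1 hjD)]
      exact ⟨0, Rat.cast_zero⟩
  set g := ∑ j ∈ range (k + 1), monomial j (f.coeff j)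
  have hg : ∀ i, g.coeff i = if i ≤ k then f.coeff i else 0 := fun i => by
    simp [g, finsetSum_coeff, coeff_monomial]
  have hgdeg : g.natDegree = k := by
    refine (natDegree_le_iff_coeff_eq_zero.2 fun j hj => ?_).antisymm
      (le_natDegree_of_ne_zero ?_)
    · rw [hg, if_neg (not_le.2 hj)]
    · rw [hg, if_pos le_rfl]; exact hk.ne_zero
  refine ⟨g, f - g, (add_sub_cancel _ _).symm, by omega, by rwa [leadingCoeff, hgdeg, hg,
    if_pos le_rfl], fun i => ?_⟩
  rw [coeff_sub, hg]
  split_ifs with hik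
  · exact ⟨0, by simp⟩
  · simpa using hrat i (not_le.1 hik)

theorem hasZeroMean_e_eval {f : ℝ[X]} (hf : ∃ n, 1 ≤ n ∧ Irrational (f.coeff n)) :
    HasZeroMean fun n : ℕ => e (f.eval (n : ℝ)) := by
  obtain ⟨g, r, rfl, hg, hglc, hr⟩ := exists_add_irrational_leadingCoeff hf
  obtain ⟨q, hq, hperiod⟩ := exists_intCast_eval_sub_eval hr
  refine .of_progressions (fun n => (norm_e _).le) hq fun s _ => ?_
  have hq0 : (q : ℝ) ≠ 0 := by positivity
  have hlin : (C (q : ℝ) * X + C (s : ℝ)).natDegree = 1 := natDegree_linear hq0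
  set G := g.comp (C (q : ℝ) * X + C (s : ℝ))
  have hGdeg : G.natDegree = g.natDegree := by rw [natDegree_comp, hlin, mul_one]
  have hGlc : Irrational G.leadingCoeff := by
    rw [leadingCoeff_comp (by rw [hlin]; exact one_ne_zero), leadingCoeff_linear hq0, mul_comm,
      ← Nat.cast_pow]
    exact hglc.natCast_mul (by positivity)
  convert (hasZeroMean_e_eval_of_irrational_leadingCoeff (hGdeg ▸ hg) hGlc).const_mul
    (e (r.eval (s : ℝ))) using 2 with m
  obtain ⟨z, hz⟩ := hperiod (q * m + s) s ⟨m, by ring⟩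
  have heval : (g + r).eval ((q * m + s : ℕ) : ℝ) = r.eval (s : ℝ) + G.eval (m : ℝ) + z := by
    push_cast at hz ⊢
    simp only [G, eval_add, eval_comp, eval_mul, eval_C, eval_X]
    linarith
  rw [heval, e_add, e_intCast, mul_one, e_add]

end Polynomials

end Weyl

open Polynomial Filter

/-- Weyl equidistribution in exponential-sum form: if some
non-constant coefficient of `f ∈ ℝ[x]` is irrational, then the averages of
`e(f(n))` tend to zero. -/
theorem stmt_13 (f : Polynomial ℝ)
    (hf : ∃ n : ℕ, 1 ≤ n ∧ Irrational (f.coeff n)) :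
    Tendsto (fun N : ℕ =>
        (N : ℂ)⁻¹ * ∑ n ∈ Finset.Icc 1 N,
          Complex.exp (2 * Real.pi * Complex.I * ((f.eval (n : ℝ) : ℝ) : ℂ)))
      atTop (nhds 0) := by
  have h := (Weyl.hasZeroMean_e_eval hf).comp_add_right (fun n => (Weyl.norm_e _).le) 1
  refine tendsto_zero_iff_norm_tendsto_zero.2 (h.congr fun N => ?_)
  rw [norm_mul, norm_inv, Complex.norm_natCast, inv_mul_eq_div,
    ← Finset.Ico_add_one_right_eq_Icc, Finset.sum_Ico_eq_sum_range, add_tsub_cancel_right]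
  simp_rw [add_comm 1]
  rfl
end
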